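/- arXiv:1206.2810 — 3 statements merged into one kernel-verified Lean document; each statement's English description precedes it below -/
import Mathlib

section
/- Let p > 2 be a prime, n a natural number coprime to p, and let D be the p-fold blow-up of a directed cycle of length n, with vertex classes X_1, ..., X_n each of size p. Then D contains p-1 pairwise edge-disjoint Hamilton cycles C^1, ..., C^{p-1} such that for every 1 ≤ d ≤ p-1 and every 1 ≤ i ≤ p, the vertices x_1^i, ..., x_n^i (the i-th vertex of each class) have pairwise distance at least p on C^d. -/
/-- Let `p > 2` be a prime and `n` coprime to `p`.  The `p`-fold blow-up
of a directed cycle of length `n` has vertex set `ZMod n × Fin p` (the vertex `x_j^i`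
is the pair `(j, i)`), with all edges going from class `X_j` to class `X_{j+1}`.
A Hamilton cycle is encoded as a bijection `C d : ZMod (n*p) ≃ ZMod n × Fin p`
(listing the vertices in cyclic order) whose consecutive vertices are adjacent in the
blow-up.  There are `p - 1` pairwise edge-disjoint Hamilton cycles `C 1, …, C (p-1)`
such that for every `d` and every `i`, the vertices `x_1^i, …, x_n^i` have pairwise
distance at least `p` on `C d` (both directed gaps along the cycle are at least `p`). -/
theorem stmt3 (p n : ℕ) (hp : p.Prime) (hp2 : 2 < p) (hn : 0 < n)
    (hco : Nat.Coprime n p) :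
    ∃ C : Fin (p - 1) → (ZMod (n * p) ≃ ZMod n × Fin p),
      -- each C d is a Hamilton cycle of the blow-up: consecutive vertices adjacent
      (∀ d, ∀ k : ZMod (n * p), ((C d) (k + 1)).1 = ((C d) k).1 + 1) ∧
      -- the Hamilton cycles are pairwise edge-disjoint
      (∀ d d', d ≠ d' → ∀ k k' : ZMod (n * p),
        ¬ ((C d) k = (C d') k' ∧ (C d) (k + 1) = (C d') (k' + 1))) ∧
      -- distance condition: for each i, the vertices (j, i) are pairwise ≥ p apart on C d
      (∀ d (i : Fin p) (j j' : ZMod n), j ≠ j' →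
        p ≤ ((C d).symm (j', i) - (C d).symm (j, i)).val) := by
  haveI : Fact p.Prime := ⟨hp⟩
  haveI : NeZero p := ⟨hp.ne_zero⟩
  haveI : NeZero (n * p) := ⟨Nat.mul_ne_zero hn.ne' hp.ne_zero⟩
  -- an equivalence between `ZMod p` and `Fin p`
  let zf : ZMod p ≃ Fin p :=
    { toFun := fun x => ⟨x.val, ZMod.val_lt x⟩
      invFun := fun i => ((i : ℕ) : ZMod p)
      left_inv := fun x => by simp [ZMod.natCast_val, ZMod.cast_id]
      right_inv := fun i => by
        ext
        simp [ZMod.val_cast_of_lt i.isLt] }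
  let crt := ZMod.chineseRemainder hco
  let a : Fin (p - 1) → ZMod p := fun d => (((d : ℕ) + 1 : ℕ) : ZMod p)
  have hlt : ∀ d : Fin (p - 1), (d : ℕ) + 1 < p := by
    intro d; have := d.isLt; omega
  have ha : ∀ d, a d ≠ 0 := by
    intro d h
    rw [ZMod.natCast_eq_zero_iff] at h
    have := Nat.le_of_dvd (Nat.succ_pos _) h
    have := hlt d
    omega
  have hainj : ∀ d d', a d = a d' → d = d' := by
    intro d d' h
    have h2 := congrArg ZMod.val h
    rw [ZMod.val_cast_of_lt (hlt d), ZMod.val_cast_of_lt (hlt d')] at h2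
    exact Fin.ext (by omega)
  refine ⟨fun d => crt.toEquiv.trans ((Equiv.refl (ZMod n)).prodCongr
      ((Equiv.mulLeft₀ (a d) (ha d)).trans zf)), ?_, ?_, ?_⟩
  · intro d k
    show (crt (k + 1)).1 = (crt k).1 + 1
    rw [map_add, map_one]
    rfl
  · rintro d d' hdd' k k' ⟨h1, h2⟩
    apply hdd'
    apply hainj
    have e1 : crt (k + 1) = crt k + 1 := by rw [map_add, map_one]
    have e2 : crt (k' + 1) = crt k' + 1 := by rw [map_add, map_one]
    have s1 : zf (a d * (crt k).2) = zf (a d' * (crt k').2) := congrArg Prod.snd h1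
    have s2 : zf (a d * (crt (k + 1)).2) = zf (a d' * (crt (k' + 1)).2) :=
      congrArg Prod.snd h2
    rw [e1, e2] at s2
    have t1 : a d * (crt k).2 = a d' * (crt k').2 := zf.injective s1
    have t2 : a d * ((crt k).2 + 1) = a d' * ((crt k').2 + 1) := zf.injective s2
    rw [mul_add, mul_add, mul_one, mul_one, t1] at t2
    exact add_left_cancel t2
  · intro d i j j' hjj'
    set E : ZMod (n * p) ≃ ZMod n × Fin p := crt.toEquiv.trans
      ((Equiv.refl (ZMod n)).prodCongr ((Equiv.mulLeft₀ (a d) (ha d)).trans zf)) with hE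
    set k := E.symm (j, i) with hk
    set k' := E.symm (j', i) with hk'
    have hEk : E k = (j, i) := E.apply_symm_apply _
    have hEk' : E k' = (j', i) := E.apply_symm_apply _
    have f1 : (crt k).1 = j := congrArg Prod.fst hEk
    have f1' : (crt k').1 = j' := congrArg Prod.fst hEk'
    have s1 : zf (a d * (crt k).2) = i := congrArg Prod.snd hEk
    have s1' : zf (a d * (crt k').2) = i := congrArg Prod.snd hEk'
    have hsnd : (crt k).2 = (crt k').2 :=
      mul_left_cancel₀ (ha d) (zf.injective (s1.trans s1'.symm))
    set m := k' - k with hm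
    have hcm : crt m = (j' - j, 0) := by
      rw [hm, map_sub]
      ext
      · show (crt k').1 - (crt k).1 = j' - j
        rw [f1, f1']
      · show (crt k').2 - (crt k).2 = 0
        rw [hsnd, sub_self]
    have hm0 : m ≠ 0 := by
      intro h
      rw [h, map_zero] at hcm
      apply hjj'
      have := congrArg Prod.fst hcm
      simp only [Prod.fst_zero] at this
      symm
      linear_combination -this
    -- the second component of `crt` is the natural cast
    have hcast : ((RingHom.snd (ZMod n) (ZMod p)).comp crt.toRingHom) =
        ZMod.castHom (dvd_mul_left p n) (ZMod p) := RingHom.ext_zmod _ _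
    have hsnd0 : ((m.val : ℕ) : ZMod p) = 0 := by
      have h1 : (crt m).2 = ZMod.castHom (dvd_mul_left p n) (ZMod p) m := by
        have := congrArg (fun f => f m) hcast
        exact this
      rw [hcm] at h1
      rw [ZMod.castHom_apply, ← ZMod.natCast_val] at h1
      exact h1.symm
    have hdvd : p ∣ m.val := (ZMod.natCast_eq_zero_iff _ _).mp hsnd0
    have hvpos : 0 < m.val := by
      rcases Nat.eq_zero_or_pos m.val with h | h
      · exact absurd ((ZMod.val_eq_zero m).mp h) hm0
      · exact h
    exact Nat.le_of_dvd hvpos hdvd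
end

section
/- Suppose 0 < 1/m ≪ ε ≤ d' ≤ d ≪ 1. Let G be an (ε,d)-regular bipartite graph with vertex classes A and B of size m, and let G' be obtained from G by removing at most d'm vertices from each vertex class and at most d'm edges incident to each remaining vertex. Then G' is (2√(d'), d)-regular. -/
open Finset
open scoped Classical

/-- The number of edges of the bipartite graph `E` between `X` and `Y`. -/
noncomputable def eCnt {A B : Type*} (E : A → B → Prop) (X : Finset A) (Y : Finset B) : ℕ :=
  ∑ x ∈ X, (Y.filter fun y => E x y).card

/-- The density `d(X,Y) = e(X,Y)/(|X||Y|)` of the bipartite graph `E` between `X` and `Y`. -/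
noncomputable def dens {A B : Type*} (E : A → B → Prop) (X : Finset A) (Y : Finset B) : ℝ :=
  (eCnt E X Y : ℝ) / ((X.card : ℝ) * (Y.card : ℝ))

/-- The pair `(A', B')` of the bipartite graph `E` is `(ε,d)`-regular: all `X ⊆ A'`,
`Y ⊆ B'` with `|X| ≥ ε|A'|`, `|Y| ≥ ε|B'|` satisfy `|d(A',B') - d(X,Y)| ≤ ε`, and the
density of the pair is `d ± ε`. -/
def IsRegularPair {A B : Type*} (E : A → B → Prop) (A' : Finset A) (B' : Finset B)
    (ε d : ℝ) : Prop :=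
  (∀ X ⊆ A', ∀ Y ⊆ B', ε * (A'.card : ℝ) ≤ (X.card : ℝ) →
      ε * (B'.card : ℝ) ≤ (Y.card : ℝ) → |dens E A' B' - dens E X Y| ≤ ε) ∧
  |dens E A' B' - d| ≤ ε

/-- The pair `(A', B')` is `(ε,d)`-superregular: it is `(ε,d)`-regular and moreover
every vertex of `A'` has degree `(d ± ε)|B'|` into `B'` and every vertex of `B'` has
degree `(d ± ε)|A'|` into `A'`. -/
def IsSuperRegularPair {A B : Type*} (E : A → B → Prop) (A' : Finset A) (B' : Finset B)
    (ε d : ℝ) : Prop :=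
  IsRegularPair E A' B' ε d ∧
  (∀ a ∈ A', |((B'.filter fun b => E a b).card : ℝ) - d * (B'.card : ℝ)| ≤ ε * (B'.card : ℝ)) ∧
  (∀ b ∈ B', |((A'.filter fun a => E a b).card : ℝ) - d * (A'.card : ℝ)| ≤ ε * (A'.card : ℝ))

/-!
Write `d' = t²`, so that `t ≤ 1/10` once `d ≤ 1/100`. Deleting at most `c` edges at every
vertex of `X` changes `e(X,Y)` by at most `c|X|`, hence `d(X,Y)` by at most `c/|Y|`. A set of
size at least `2t|A'| ≥ 2t(1 - t²)m` is also large in `A`, so regularity of `G` puts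
`d_{G'}(X,Y)` within `ε + t²m/|Y| ≤ ε + 2t/3` of `d_G(A,B)`, for `(X,Y)` as well as for
`(A',B')`. The triangle inequality then gives both regularity conditions of `G'` with
`2ε + 4t/3 ≤ 2t` to spare.
-/

lemma sq_mul_div_le_of_two_mul_le {t m y : ℝ} (ht : 0 < t) (ht' : t ≤ 1 / 10) (hm : 0 < m)
    (hy : 2 * t * (m - t ^ 2 * m) ≤ y) : t ^ 2 * m / y ≤ 2 * t / 3 := by
  have ht2 : t ^ 2 ≤ 1 / 100 := by nlinarith
  have hr : 0 < m - t ^ 2 * m := by nlinarith [mul_le_mul_of_nonneg_right ht2 hm.le]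
  have hypos : 0 < y := lt_of_lt_of_le (by positivity) hy
  rw [div_le_iff₀ hypos]
  nlinarith [mul_le_mul_of_nonneg_left hy ht.le,
    mul_le_mul_of_nonneg_right ht2 (by positivity : 0 ≤ t ^ 2 * m)]

section

variable {A B : Type*} {E E' : A → B → Prop} {P A' X : Finset A} {Q B' Y : Finset B}
  {ε d c t m : ℝ}

lemma eCnt_le_eCnt_of_imp (h : ∀ a b, E' a b → E a b) : eCnt E' X Y ≤ eCnt E X Y :=
  sum_le_sum fun x _ => card_le_card (monotone_filter_right _ fun y _ hy => h x y hy)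

lemma eCnt_le_eCnt_add_card_mul (hX : X ⊆ A') (hY : Y ⊆ B')
    (hdeg : ∀ a ∈ A', ((B'.filter fun b => E a b ∧ ¬ E' a b).card : ℝ) ≤ c) :
    (eCnt E X Y : ℝ) ≤ eCnt E' X Y + X.card * c := by
  have hvertex : ∀ x ∈ X,
      ((Y.filter fun y => E x y).card : ℝ) ≤ (Y.filter fun y => E' x y).card + c := by
    intro x hx
    have hsplit : (Y.filter fun y => E x y) ⊆
        (Y.filter fun y => E' x y) ∪ (Y.filter fun y => E x y ∧ ¬ E' x y) := by
      intro y
      simp only [mem_filter, mem_union]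
      tauto
    have hlost : ((Y.filter fun y => E x y ∧ ¬ E' x y).card : ℝ) ≤ c :=
      le_trans (by exact_mod_cast card_le_card (filter_subset_filter _ hY)) (hdeg x (hX hx))
    have hcard : ((Y.filter fun y => E x y).card : ℝ) ≤
        (Y.filter fun y => E' x y).card + (Y.filter fun y => E x y ∧ ¬ E' x y).card := by
      exact_mod_cast (card_le_card hsplit).trans (card_union_le _ _)
    linarith
  unfold eCnt
  push_cast
  calc ∑ x ∈ X, ((Y.filter fun y => E x y).card : ℝ)
      ≤ ∑ x ∈ X, (((Y.filter fun y => E' x y).card : ℝ) + c) := sum_le_sum hvertex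
    _ = ∑ x ∈ X, ((Y.filter fun y => E' x y).card : ℝ) + X.card * c := by
      rw [sum_add_distrib, sum_const, nsmul_eq_mul]

lemma abs_dens_sub_dens_le_of_deg_le (hsub : ∀ a b, E' a b → E a b) (hX : X ⊆ A') (hY : Y ⊆ B')
    (hdeg : ∀ a ∈ A', ((B'.filter fun b => E a b ∧ ¬ E' a b).card : ℝ) ≤ c)
    (hXpos : 0 < (X.card : ℝ)) (hYpos : 0 < (Y.card : ℝ)) :
    |dens E X Y - dens E' X Y| ≤ c / Y.card := by
  have hupper := eCnt_le_eCnt_add_card_mul hX hY hdeg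
  have hlower : (eCnt E' X Y : ℝ) ≤ eCnt E X Y := by
    exact_mod_cast eCnt_le_eCnt_of_imp hsub
  unfold _root_.dens
  rw [div_sub_div_same, abs_div, abs_of_pos (mul_pos hXpos hYpos),
    abs_of_nonneg (by linarith), div_le_div_iff₀ (mul_pos hXpos hYpos) hYpos]
  nlinarith

lemma IsRegularPair.abs_dens_sub_dens_subgraph_le (hreg : IsRegularPair E P Q ε d)
    (hsub : ∀ a b, E' a b → E a b)
    (hdeg : ∀ a ∈ A', ((B'.filter fun b => E a b ∧ ¬ E' a b).card : ℝ) ≤ c)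
    (hXA' : X ⊆ A') (hA'P : A' ⊆ P) (hYB' : Y ⊆ B') (hB'Q : B' ⊆ Q)
    (hX : ε * P.card ≤ X.card) (hY : ε * Q.card ≤ Y.card)
    (hXpos : 0 < (X.card : ℝ)) (hYpos : 0 < (Y.card : ℝ)) :
    |dens E P Q - dens E' X Y| ≤ ε + c / Y.card :=
  calc |dens E P Q - dens E' X Y|
      ≤ |dens E P Q - dens E X Y| + |dens E X Y - dens E' X Y| := abs_sub_le _ _ _
    _ ≤ ε + c / Y.card :=
      add_le_add (hreg.1 X (hXA'.trans hA'P) Y (hYB'.trans hB'Q) hX hY)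
        (abs_dens_sub_dens_le_of_deg_le hsub hXA' hYB' hdeg hXpos hYpos)

lemma IsRegularPair.abs_dens_sub_dens_subgraph_le_of_large (hreg : IsRegularPair E P Q ε d)
    (ht : 0 < t) (ht' : t ≤ 1 / 10) (hε : ε ≤ t ^ 2) (hm : 0 < m) (hP : (P.card : ℝ) = m)
    (hQ : (Q.card : ℝ) = m) (hsub : ∀ a b, E' a b → E a b)
    (hdeg : ∀ a ∈ A', ((B'.filter fun b => E a b ∧ ¬ E' a b).card : ℝ) ≤ t ^ 2 * m)
    (hXA' : X ⊆ A') (hA'P : A' ⊆ P) (hYB' : Y ⊆ B') (hB'Q : B' ⊆ Q)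
    (hX : 2 * t * (m - t ^ 2 * m) ≤ X.card) (hY : 2 * t * (m - t ^ 2 * m) ≤ Y.card) :
    |dens E P Q - dens E' X Y| ≤ ε + 2 * t / 3 := by
  have hr : 0 < m - t ^ 2 * m := by nlinarith [mul_le_mul_of_nonneg_right ht' hm.le]
  have hεr : ε * m ≤ 2 * t * (m - t ^ 2 * m) := by
    nlinarith [mul_le_mul_of_nonneg_right hε hm.le,
      mul_nonneg (mul_nonneg ht.le hm.le) (by nlinarith : (0 : ℝ) ≤ 2 - t - 2 * t ^ 2)]
  calc |dens E P Q - dens E' X Y|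
      ≤ ε + t ^ 2 * m / Y.card :=
        hreg.abs_dens_sub_dens_subgraph_le hsub hdeg hXA' hA'P hYB' hB'Q
          (by rw [hP]; linarith) (by rw [hQ]; linarith) (by nlinarith) (by nlinarith)
    _ ≤ ε + 2 * t / 3 := by linarith [sq_mul_div_le_of_two_mul_le ht ht' hm hY]

lemma IsRegularPair.isRegularPair_subgraph (hreg : IsRegularPair E P Q ε d)
    (ht : 0 < t) (ht' : t ≤ 1 / 10) (hε : ε ≤ t ^ 2) (hm : 0 < m) (hP : (P.card : ℝ) = m)
    (hQ : (Q.card : ℝ) = m) (hsub : ∀ a b, E' a b → E a b)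
    (hdeg : ∀ a ∈ A', ((B'.filter fun b => E a b ∧ ¬ E' a b).card : ℝ) ≤ t ^ 2 * m)
    (hA'P : A' ⊆ P) (hB'Q : B' ⊆ Q) (hA' : m - t ^ 2 * m ≤ A'.card)
    (hB' : m - t ^ 2 * m ≤ B'.card) : IsRegularPair E' A' B' (2 * t) d := by
  have hεt : ε ≤ t / 10 := by nlinarith
  have hr : 0 ≤ m - t ^ 2 * m := by nlinarith [mul_le_mul_of_nonneg_right ht' hm.le]
  have hlarge : ∀ n : ℝ, m - t ^ 2 * m ≤ n → 2 * t * (m - t ^ 2 * m) ≤ n := fun n hn => by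
    nlinarith [mul_le_mul_of_nonneg_right (show 2 * t ≤ 1 by linarith) hr]
  have close := fun {X Y} => hreg.abs_dens_sub_dens_subgraph_le_of_large (X := X) (Y := Y)
    ht ht' hε hm hP hQ hsub hdeg
  have hAB := close subset_rfl hA'P subset_rfl hB'Q (hlarge _ hA') (hlarge _ hB')
  refine ⟨fun X hX Y hY hXc hYc => ?_, ?_⟩
  · have hXY := close hX hA'P hY hB'Q
      (by nlinarith [mul_le_mul_of_nonneg_left hA' (by positivity : (0 : ℝ) ≤ 2 * t)])
      (by nlinarith [mul_le_mul_of_nonneg_left hB' (by positivity : (0 : ℝ) ≤ 2 * t)])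
    calc |dens E' A' B' - dens E' X Y|
        ≤ |dens E P Q - dens E' A' B'| + |dens E P Q - dens E' X Y| := by
          rw [abs_sub_comm (dens E P Q)]; exact abs_sub_le _ _ _
      _ ≤ 2 * t := by linarith
  · calc |dens E' A' B' - d|
        ≤ |dens E P Q - dens E' A' B'| + |dens E P Q - d| := by
          rw [abs_sub_comm (dens E P Q)]; exact abs_sub_le _ _ _
      _ ≤ 2 * t := by linarith [hreg.2]

end

/-- Suppose `0 < 1/m ≪ ε ≤ d' ≤ d ≪ 1`.  If `G` is an `(ε,d)`-regular
bipartite graph with vertex classes `A`, `B` of size `m`, and `G'` is obtained from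
`G` by removing at most `d'm` vertices from each vertex class and at most `d'm` edges
incident to each remaining vertex, then `G'` is `(2√d', d)`-regular.  The hierarchy
`≪` is expressed by nested quantifiers. -/
theorem stmt9 :
    ∃ d₀ : ℝ, 0 < d₀ ∧ ∀ d : ℝ, 0 < d → d ≤ d₀ →
      ∀ d' ε : ℝ, 0 < ε → ε ≤ d' → d' ≤ d →
        ∃ m₀ : ℕ, ∀ m : ℕ, m₀ ≤ m →
          ∀ (A B : Type) [Fintype A] [Fintype B],
            Fintype.card A = m → Fintype.card B = m →
            ∀ (E E' : A → B → Prop) (A' : Finset A) (B' : Finset B),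
              IsRegularPair E Finset.univ Finset.univ ε d →
              -- at most d'm vertices are removed from each class
              (m : ℝ) - d' * (m : ℝ) ≤ (A'.card : ℝ) →
              (m : ℝ) - d' * (m : ℝ) ≤ (B'.card : ℝ) →
              -- G' is a subgraph of G on the classes A', B'
              (∀ a b, E' a b → E a b ∧ a ∈ A' ∧ b ∈ B') →
              -- at most d'm edges are removed at each remaining vertex
              (∀ a ∈ A', ((B'.filter fun b => E a b ∧ ¬ E' a b).card : ℝ) ≤ d' * (m : ℝ)) →
              (∀ b ∈ B', ((A'.filter fun a => E a b ∧ ¬ E' a b).card : ℝ) ≤ d' * (m : ℝ)) →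
              IsRegularPair E' A' B' (2 * Real.sqrt d') d := by
  refine ⟨1 / 100, by norm_num, fun d _ hd d' ε _ hεd' hd'd => ⟨1, ?_⟩⟩
  intro m hm A B _ _ hA hB E E' A' B' hreg hA' hB' hsub hdegA _
  obtain ⟨t, ht, rfl⟩ : ∃ t, 0 < t ∧ d' = t ^ 2 :=
    ⟨√d', Real.sqrt_pos.mpr (by linarith), (Real.sq_sqrt (by linarith)).symm⟩
  rw [Real.sqrt_sq ht.le]
  exact hreg.isRegularPair_subgraph ht (by nlinarith) hεd' (by exact_mod_cast hm)
    (by rw [card_univ, hA]) (by rw [card_univ, hB]) (fun a b h => (hsub a b h).1) hdegA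
    (subset_univ A') (subset_univ B') hA' hB'
end

section
/- Let p > 2 be a prime and n ∈ ℕ with n > 2 and p dividing n (so p and n are not coprime, but p is coprime to n-2). Let D be the p-fold blow-up of a directed cycle of length n with vertex classes X_1, ..., X_n each of size p. Then D contains p-1 pairwise edge-disjoint Hamilton cycles C^1, ..., C^{p-1} such that for every 1 ≤ d ≤ p-1 and 1 ≤ i ≤ p, the vertices x_1^i, ..., x_{n-2}^i have pairwise distance at least p on C^d. -/
namespace Stmt13


def T (p n : ℕ) (a c : ZMod p) (j : ZMod n) (i : Fin p) : ℕ :=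
  (a * (j.val : ZMod p) + c * (i.val : ZMod p)).val

def F (p n : ℕ) (a c : ZMod p) (x : ZMod n × Fin p) : ZMod (n * p) :=
  ((x.1.val + n * T p n a c x.1 x.2 : ℕ) : ZMod (n * p))

section

variable {p n : ℕ} [Fact p.Prime] [NeZero n] {a c : ZMod p}

lemma nat_lt (x : ZMod n × Fin p) : x.1.val + n * T p n a c x.1 x.2 < n * p := by
  have h1 : x.1.val < n := ZMod.val_lt x.1
  have h2 : T p n a c x.1 x.2 < p := ZMod.val_lt _
  have h3 : n * T p n a c x.1 x.2 ≤ n * (p - 1) := Nat.mul_le_mul_left n (by omega)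
  have h4 : n * (p - 1) + n = n * p := by
    rw [← Nat.mul_succ]; congr 1
    have := (Fact.out : p.Prime).pos; omega
  omega

lemma val_F (x : ZMod n × Fin p) :
    haveI : NeZero (n * p) := ⟨Nat.mul_ne_zero (NeZero.ne n) (NeZero.ne p)⟩
    (F p n a c x).val = x.1.val + n * T p n a c x.1 x.2 :=
  ZMod.val_cast_of_lt (nat_lt x)

lemma T_cast (j : ZMod n) (i : Fin p) :
    ((T p n a c j i : ℕ) : ZMod p) = a * (j.val : ZMod p) + c * (i.val : ZMod p) := by
  simp [T, ZMod.natCast_val, ZMod.cast_id]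

lemma decomp {n : ℕ} (j2 t2 r s : ℕ) (hn : 0 < n) (hj2 : j2 < n) (hr : r < n)
    (h : j2 + n * t2 = r + n * s) : j2 = r ∧ t2 = s := by
  have h1 := Nat.add_mul_mod_self_left j2 n t2
  have h2 := Nat.add_mul_mod_self_left r n s
  have hj : j2 = r := by
    rw [h, h2, Nat.mod_eq_of_lt hr] at h1
    rw [Nat.mod_eq_of_lt hj2] at h1
    omega
  refine ⟨hj, ?_⟩
  have : n * t2 = n * s := by omega
  exact Nat.eq_of_mul_eq_mul_left hn this

/-- Key step lemma: how the second coordinate changes along an edge. -/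
lemma step (hpn : p ∣ n) (ha2 : 2 * a = 1) (x y : ZMod n × Fin p)
    (hxy : F p n a c y = F p n a c x + 1) :
    c * ((y.2.val : ZMod p) - (x.2.val : ZMod p))
      = if x.1.val = n - 1 then a else -a := by
  haveI : NeZero (n * p) := ⟨Nat.mul_ne_zero (NeZero.ne n) (NeZero.ne p)⟩
  have hppos : 0 < p := (Fact.out : p.Prime).pos
  have hnpos : 0 < n := Nat.pos_of_ne_zero (NeZero.ne n)
  set j := x.1.val with hjdef
  set t := T p n a c x.1 x.2 with htdef
  set j2 := y.1.val with hj2def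
  set t2 := T p n a c y.1 y.2 with ht2def
  have hjlt : j < n := ZMod.val_lt x.1
  have hj2lt : j2 < n := ZMod.val_lt y.1
  have htlt : t < p := ZMod.val_lt _
  have ht2lt : t2 < p := ZMod.val_lt _
  have hxlt : j + n * t < n * p := nat_lt x
  have hxcast : F p n a c x + 1 = ((j + n * t + 1 : ℕ) : ZMod (n * p)) := by
    simp only [F]; push_cast; ring
  -- casts we will need
  have hTx : ((t : ℕ) : ZMod p) = a * (j : ZMod p) + c * (x.2.val : ZMod p) := T_cast x.1 x.2
  have hTy : ((t2 : ℕ) : ZMod p) = a * (j2 : ZMod p) + c * (y.2.val : ZMod p) := T_cast y.1 y.2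
  have hncast : ((n : ℕ) : ZMod p) = 0 := (ZMod.natCast_eq_zero_iff n p).mpr hpn
  rcases Nat.lt_or_ge (j + n * t + 1) (n * p) with hlt | hge
  · -- no wrap-around modulo n*p
    have hvals : j2 + n * t2 = j + n * t + 1 := by
      have h := val_F (p := p) (n := n) (a := a) (c := c) y
      rw [hxy, hxcast, ZMod.val_cast_of_lt hlt] at h
      exact h.symm
    rcases Nat.lt_or_ge j (n - 1) with hj | hj
    · -- interior step: j2 = j + 1, t2 = t
      have hd := decomp j2 t2 (j+1) t hnpos hj2lt (by omega) (by omega)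
      have hij : (j2 : ZMod p) = (j : ZMod p) + 1 := by rw [hd.1]; push_cast; ring
      have hit : ((t2 : ℕ) : ZMod p) = ((t : ℕ) : ZMod p) := by rw [hd.2]
      rw [if_neg (by omega)]
      rw [hTx, hTy, hij] at hit
      linear_combination hit
    · -- j = n - 1 and no wrap: j2 = 0, t2 = t + 1
      have hjeq : j = n - 1 := by omega
      have hd := decomp j2 t2 0 (t+1) hnpos hj2lt (by omega)
        (by have e : n * (t+1) = n * t + n := Nat.mul_succ n t ▸ rfl; omega)
      have hij : (j2 : ZMod p) = 0 := by rw [hd.1]; push_cast; ring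
      have hij' : (j : ZMod p) = -1 := by
        rw [hjeq]
        have : ((n - 1 : ℕ) : ZMod p) = ((n:ℕ) : ZMod p) - 1 := by
          push_cast [Nat.cast_sub (by omega : 1 ≤ n)]; ring
        rw [this, hncast]; ring
      have hit : ((t2 : ℕ) : ZMod p) = ((t : ℕ) : ZMod p) + 1 := by
        rw [hd.2]; push_cast; ring
      rw [if_pos hjeq]
      rw [hTx, hTy, hij, hij'] at hit
      linear_combination hit - ha2
  · -- wrap-around: j + n*t + 1 = n*p, so j = n-1, t = p-1, j2 = 0, t2 = 0
    have heq : j + n * t + 1 = n * p := by omega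
    have hjeq : j = n - 1 := by
      have h1 := Nat.add_mul_mod_self_left j n t
      have h2 : (j + n * t) % n = (n * p - 1) % n := by congr 1; omega
      have h3 : (n * p - 1) % n = n - 1 := by
        have : n * p - 1 = (n - 1) + n * (p - 1) := by
          have e : n * p = n * (p-1) + n := by
            rw [← Nat.mul_succ]; congr 1; omega
          omega
        rw [this, Nat.add_mul_mod_self_left, Nat.mod_eq_of_lt (by omega)]
      rw [h2, h3, Nat.mod_eq_of_lt hjlt] at h1
      omega
    have hteq : t = p - 1 := by
      have : n * t = n * (p - 1) := by
        have e : n * p = n * (p-1) + n := by rw [← Nat.mul_succ]; congr 1; omega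
        omega
      exact Nat.eq_of_mul_eq_mul_left hnpos this
    have hy0 : F p n a c y = 0 := by
      rw [hxy, hxcast, heq]; exact_mod_cast ZMod.natCast_self (n * p)
    have hvals : j2 + n * t2 = 0 := by
      have h := val_F (p := p) (n := n) (a := a) (c := c) y
      rw [hy0, ZMod.val_zero] at h
      exact h.symm
    have hj20 : j2 = 0 := by omega
    have ht20 : t2 = 0 := by
      have : n * t2 = 0 := by omega
      rcases Nat.mul_eq_zero.mp this with h | h
      · omega
      · exact h
    have hij : (j2 : ZMod p) = 0 := by rw [hj20]; push_cast; ring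
    have hij' : (j : ZMod p) = -1 := by
      rw [hjeq]
      have : ((n - 1 : ℕ) : ZMod p) = ((n:ℕ) : ZMod p) - 1 := by
        push_cast [Nat.cast_sub (by omega : 1 ≤ n)]; ring
      rw [this, hncast]; ring
    have hit2 : ((t2 : ℕ) : ZMod p) = 0 := by rw [ht20]; push_cast; ring
    have hit : ((t : ℕ) : ZMod p) = -1 := by
      rw [hteq]
      have : ((p - 1 : ℕ) : ZMod p) = ((p:ℕ) : ZMod p) - 1 := by
        push_cast [Nat.cast_sub (by omega : 1 ≤ p)]; ring
      rw [this, ZMod.natCast_self]; ring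
    rw [if_pos hjeq]
    rw [hTy, hij] at hit2
    rw [hTx, hij'] at hit
    linear_combination hit2 - hit - ha2

lemma F_inj (hc : c ≠ 0) : Function.Injective (F p n a c) := by
  haveI : NeZero (n * p) := ⟨Nat.mul_ne_zero (NeZero.ne n) (NeZero.ne p)⟩
  intro x y hxy
  have hv : x.1.val + n * T p n a c x.1 x.2 = y.1.val + n * T p n a c y.1 y.2 := by
    rw [← val_F x, ← val_F y, hxy]
  have hx1 : x.1.val < n := ZMod.val_lt x.1
  have hy1 : y.1.val < n := ZMod.val_lt y.1
  have hmodx := Nat.add_mul_mod_self_left x.1.val n (T p n a c x.1 x.2)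
  have hmody := Nat.add_mul_mod_self_left y.1.val n (T p n a c y.1 y.2)
  have hj : x.1.val = y.1.val := by
    have := hv ▸ hmodx
    rw [hmody] at this
    rw [Nat.mod_eq_of_lt hx1, Nat.mod_eq_of_lt hy1] at this
    exact this.symm
  have hj' : x.1 = y.1 := ZMod.val_injective n hj
  have hT : n * T p n a c x.1 x.2 = n * T p n a c y.1 y.2 := by omega
  have hT' : T p n a c x.1 x.2 = T p n a c y.1 y.2 :=
    Nat.eq_of_mul_eq_mul_left (Nat.pos_of_ne_zero (NeZero.ne n)) hT
  have hTc : a * (x.1.val : ZMod p) + c * (x.2.val : ZMod p)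
      = a * (y.1.val : ZMod p) + c * (y.2.val : ZMod p) := by
    rw [← T_cast x.1 x.2, ← T_cast y.1 y.2, hT']
  rw [hj'] at hTc
  have hi : (x.2.val : ZMod p) = (y.2.val : ZMod p) :=
    mul_left_cancel₀ hc (add_left_cancel hTc)
  have : x.2.val = y.2.val := by
    have h1 : ((x.2.val : ZMod p)).val = x.2.val := ZMod.val_cast_of_lt x.2.isLt
    have h2 : ((y.2.val : ZMod p)).val = y.2.val := ZMod.val_cast_of_lt y.2.isLt
    rw [← h1, ← h2, hi]
  exact Prod.ext hj' (Fin.ext this)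


lemma F_bij (hc : c ≠ 0) : Function.Bijective (F p n a c) := by
  haveI : NeZero (n * p) := ⟨Nat.mul_ne_zero (NeZero.ne n) (NeZero.ne p)⟩
  rw [Fintype.bijective_iff_injective_and_card]
  exact ⟨F_inj hc, by simp [ZMod.card]⟩


end

lemma arith (p n N A B j j' t t' : ℕ)
    (hp2 : 2 < p) (hpn : p ≤ n)
    (hN : N = n * p)
    (hA : A = j + n * t) (hB : B = j' + n * t')
    (hj : 1 ≤ j) (hjn : j ≤ n - 2) (hj' : 1 ≤ j') (hjn' : j' ≤ n - 2) (hne : j ≠ j')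
    (ht : t < p) (ht' : t' < p)
    (hdvdn : (p:ℤ) ∣ (n:ℤ))
    (hKey : (p:ℤ) ∣ ((j':ℤ) - (j:ℤ)) - 2 * ((t':ℤ) - (t:ℤ))) :
    p ≤ (B + (N - A)) % N := by
  have hn3 : 3 ≤ n := by omega
  -- linear facts about N (proved with nonlinear reasoning, stated linearly)
  have h3n : 3 * n ≤ N := by rw [hN]; calc 3 * n = n * 3 := by ring
                                              _ ≤ n * p := Nat.mul_le_mul_left n (by omega)
  have h2np : 2 * n + p ≤ N := by
    rw [hN]
    have : n * p = n * (p - 2) + 2 * n := by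
      have : p - 2 + 2 = p := by omega
      calc n * p = n * ((p-2) + 2) := by rw [this]
        _ = n * (p-2) + 2*n := by ring
    rw [this]
    have : n ≤ n * (p - 2) := Nat.le_mul_of_pos_right n (by omega)
    omega
  have hAN : A < N := by
    rw [hA, hN]
    have h4 : n * t + n ≤ n * p := by
      calc n * t + n = n * (t + 1) := by ring
        _ ≤ n * p := Nat.mul_le_mul_left n (by omega)
    omega
  have hBN : B < N := by
    rw [hB, hN]
    have h4 : n * t' + n ≤ n * p := by
      calc n * t' + n = n * (t' + 1) := by ring
        _ ≤ n * p := Nat.mul_le_mul_left n (by omega)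
    omega
  have hA1 : 1 ≤ A := by rw [hA]; omega
  have hB1 : 1 ≤ B := by rw [hB]; omega
  have hmain : (A ≤ B → p + A ≤ B) ∧ (B < A → p + A ≤ B + N) := by
    have hsplit : ((t':ℤ) - t = 0) ∨ ((t':ℤ) - t = 1) ∨ ((t':ℤ) - t = -1) ∨
        ((t':ℤ) - t = (p:ℤ) - 1) ∨ ((t':ℤ) - t = -((p:ℤ) - 1)) ∨
        (2 ≤ (t':ℤ) - t ∧ (t':ℤ) - t ≤ (p:ℤ) - 2) ∨
        (2 ≤ (t:ℤ) - t' ∧ (t:ℤ) - t' ≤ (p:ℤ) - 2) := by omega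
    rcases hsplit with h0 | h1 | hm1 | hP | hmP | hMid | hMid'
    · -- t' = t
      have htt : t = t' := by omega
      have hrel : (B:ℤ) - A = (j':ℤ) - j := by rw [hA, hB, htt]; push_cast; ring
      have hdJ : (p:ℤ) ∣ (j':ℤ) - j := by
        have : ((j':ℤ) - (j:ℤ)) = ((j':ℤ) - (j:ℤ)) - 2 * ((t':ℤ) - (t:ℤ)) := by
          rw [h0]; ring
        rw [this]; exact hKey
      have habs : (p:ℤ) ≤ (j':ℤ) - j ∨ (p:ℤ) ≤ (j:ℤ) - j' := by
        rcases lt_trichotomy ((j':ℤ) - j) 0 with h | h | h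
        · exact Or.inr (Int.le_of_dvd (by omega) (by
            have := hdJ.neg_right
            simpa using this))
        · omega
        · exact Or.inl (Int.le_of_dvd h hdJ)
      constructor <;> intro <;> omega
    · -- t' = t + 1
      have htt : t' = t + 1 := by omega
      have hrel : (B:ℤ) - A = ((j':ℤ) - j) + n := by rw [hA, hB, htt]; push_cast; ring
      have hd : (p:ℤ) ∣ ((j':ℤ) - j) - 2 + n := by
        have e : ((j':ℤ) - j) - 2 + n = (((j':ℤ) - (j:ℤ)) - 2 * ((t':ℤ) - (t:ℤ))) + n := by
          rw [h1]; ring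
        rw [e]; exact hKey.add hdvdn
      have hle : (p:ℤ) ≤ ((j':ℤ) - j) - 2 + n := Int.le_of_dvd (by omega) hd
      constructor <;> intro <;> omega
    · -- t' = t - 1
      have htt : t = t' + 1 := by omega
      have hrel : (B:ℤ) - A = ((j':ℤ) - j) - n := by rw [hA, hB, htt]; push_cast; ring
      have hd : (p:ℤ) ∣ ((j':ℤ) - j) + 2 + n := by
        have e : ((j':ℤ) - j) + 2 + n = (((j':ℤ) - (j:ℤ)) - 2 * ((t':ℤ) - (t:ℤ))) + n := by
          rw [hm1]; ring
        rw [e]; exact hKey.add hdvdn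
      have hle : (p:ℤ) ≤ ((j':ℤ) - j) + 2 + n := Int.le_of_dvd (by omega) hd
      constructor <;> intro <;> omega
    · -- t' - t = p - 1, so t = 0, t' = p - 1
      have htt : t = 0 ∧ t' = p - 1 := by omega
      have hrel : (B:ℤ) - A = ((j':ℤ) - j) + (N - n) := by
        rw [hA, hB, htt.1, htt.2, hN]; push_cast [hp2.le] ; ring_nf
        rw [Nat.cast_sub (by omega : 1 ≤ p)]; ring
      constructor <;> intro <;> omega
    · -- t' - t = -(p-1), so t = p - 1, t' = 0
      have htt : t = p - 1 ∧ t' = 0 := by omega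
      have hrel : (B:ℤ) - A = ((j':ℤ) - j) - (N - n) := by
        rw [hA, hB, htt.1, htt.2, hN]; push_cast; ring_nf
        rw [Nat.cast_sub (by omega : 1 ≤ p)]; ring
      have hd : (p:ℤ) ∣ ((j':ℤ) - j) - 2 + n := by
        have e : ((j':ℤ) - j) - 2 + n =
            ((((j':ℤ) - (j:ℤ)) - 2 * ((t':ℤ) - (t:ℤ))) - 2 * p) + n := by
          rw [hmP]; ring
        rw [e]; exact (hKey.sub ((dvd_refl (p:ℤ)).mul_left 2)).add hdvdn
      have hle : (p:ℤ) ≤ ((j':ℤ) - j) - 2 + n := Int.le_of_dvd (by omega) hd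
      constructor <;> intro <;> omega
    · -- 2 ≤ t' - t ≤ p - 2
      have hv : 2 * (n:ℤ) ≤ (n:ℤ) * ((t':ℤ) - t) := by nlinarith [hMid.1, hn3]
      have hrel : (B:ℤ) - A = ((j':ℤ) - j) + (n:ℤ) * ((t':ℤ) - t) := by
        rw [hA, hB]; push_cast; ring
      constructor <;> intro <;> omega
    · -- 2 ≤ t - t' ≤ p - 2
      have hv : 2 * (n:ℤ) ≤ (n:ℤ) * ((t:ℤ) - t') := by nlinarith [hMid'.1, hn3]
      have hv2 : (n:ℤ) * ((t:ℤ) - t') ≤ (N:ℤ) - 2 * n := by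
        have e1 : (n:ℤ) * ((t:ℤ) - t') ≤ (n:ℤ) * ((p:ℤ) - 2) := by
          apply mul_le_mul_of_nonneg_left hMid'.2 (by positivity)
        have e2 : (n:ℤ) * ((p:ℤ) - 2) = (N:ℤ) - 2*n := by rw [hN]; push_cast; ring
        omega
      have hrel : (B:ℤ) - A = ((j':ℤ) - j) - (n:ℤ) * ((t:ℤ) - t') := by
        rw [hA, hB]; push_cast; ring
      constructor <;> intro <;> omega
  rcases le_or_gt A B with hAB | hAB
  · have e1 : B + (N - A) = (B - A) + N := by omega
    rw [e1, Nat.add_mod_right, Nat.mod_eq_of_lt (by omega : B - A < N)]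
    omega
  · rw [Nat.mod_eq_of_lt (by omega : B + (N - A) < N)]
    omega



section
variable {p n : ℕ} [Fact p.Prime] [NeZero n] {a c : ZMod p}

set_option linter.unusedSectionVars false in
lemma Fcast (x : ZMod n × Fin p) :
    ZMod.castHom (dvd_mul_right n p) (ZMod n) (F p n a c x) = x.1 := by
  rw [F, map_natCast]
  push_cast [ZMod.natCast_self, ZMod.natCast_val, ZMod.cast_id]
  ring

end

end Stmt13

open Stmt13

/-- Let `p > 2` be a prime, `n > 2` with `p ∣ n`.  The `p`-fold blow-up
of a directed cycle of length `n` has vertex set `ZMod n × Fin p` (vertex `x_j^i` is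
the pair `(j, i)`), with all edges from class `X_j` to class `X_{j+1}`.  A Hamilton
cycle is encoded as a bijection `C d : ZMod (n*p) ≃ ZMod n × Fin p` whose consecutive
vertices are adjacent in the blow-up.  There are `p - 1` pairwise edge-disjoint
Hamilton cycles such that for every `d` and every `i`, the vertices
`x_1^i, …, x_{n-2}^i` have pairwise distance at least `p` on `C d`
(both directed gaps along the cycle are at least `p`). -/
theorem stmt13 (p n : ℕ) (hp : p.Prime) (hp2 : 2 < p) (hn : 2 < n) (hdvd : p ∣ n) :
    ∃ C : Fin (p - 1) → (ZMod (n * p) ≃ ZMod n × Fin p),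
      -- each C d is a Hamilton cycle of the blow-up: consecutive vertices adjacent
      (∀ d, ∀ k : ZMod (n * p), ((C d) (k + 1)).1 = ((C d) k).1 + 1) ∧
      -- the Hamilton cycles are pairwise edge-disjoint
      (∀ d d', d ≠ d' → ∀ k k' : ZMod (n * p),
        ¬ ((C d) k = (C d') k' ∧ (C d) (k + 1) = (C d') (k' + 1))) ∧
      -- distance condition for the vertices x_1^i, …, x_{n-2}^i
      (∀ d (i : Fin p) (j j' : ℕ), 1 ≤ j → j ≤ n - 2 → 1 ≤ j' → j' ≤ n - 2 → j ≠ j' →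
        p ≤ ((C d).symm ((j' : ZMod n), i) - (C d).symm ((j : ZMod n), i)).val) := by
  haveI hfact : Fact p.Prime := ⟨hp⟩
  haveI : NeZero n := ⟨by omega⟩
  haveI : NeZero (n * p) := ⟨Nat.mul_ne_zero (by omega) (by omega)⟩
  -- the "slope" 2⁻¹
  set a : ZMod p := (2 : ZMod p)⁻¹ with hadef
  have h2ne : (2 : ZMod p) ≠ 0 := by
    have h : ((2:ℕ) : ZMod p) ≠ 0 := by
      rw [Ne, ZMod.natCast_eq_zero_iff]
      intro h
      exact absurd (Nat.le_of_dvd (by omega) h) (by omega)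
    simpa using h
  have ha2 : 2 * a = 1 := mul_inv_cancel₀ h2ne
  have hane : a ≠ 0 := by
    intro h
    rw [h, mul_zero] at ha2
    exact zero_ne_one ha2
  -- the "colour multipliers"
  set c : Fin (p-1) → ZMod p := fun d => ((d.val + 1 : ℕ) : ZMod p) with hcdef
  have hcval : ∀ d : Fin (p-1), (c d).val = d.val + 1 := by
    intro d
    have := d.isLt
    exact ZMod.val_cast_of_lt (by omega)
  have hcne : ∀ d, c d ≠ 0 := by
    intro d h
    have := hcval d
    rw [h, ZMod.val_zero] at this
    omega
  have hcinj : Function.Injective c := by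
    intro d d' h
    have h1 := hcval d
    have h2 := hcval d'
    rw [h] at h1
    exact Fin.ext (by omega)
  set E : Fin (p-1) → ((ZMod n × Fin p) ≃ ZMod (n * p)) :=
    fun d => Equiv.ofBijective (F p n a (c d)) (F_bij (hcne d)) with hEdef
  have hEapp : ∀ d x, E d x = F p n a (c d) x := fun d x => rfl
  refine ⟨fun d => (E d).symm, ?_, ?_, ?_⟩
  · -- Hamilton condition
    have hfst : ∀ d (k : ZMod (n*p)), ((E d).symm k).1
        = ZMod.castHom (dvd_mul_right n p) (ZMod n) k := by
      intro d k
      conv_rhs => rw [← Equiv.apply_symm_apply (E d) k]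
      rw [hEapp, Fcast]
    intro d k
    rw [hfst, hfst, map_add, map_one]
  · -- edge-disjointness
    rintro d d' hne k k' ⟨h1, h2⟩
    set x := (E d).symm k with hx
    set y := (E d).symm (k+1) with hy
    have hFdx : F p n a (c d) x = k := by rw [← hEapp, hx, Equiv.apply_symm_apply]
    have hFdy : F p n a (c d) y = k + 1 := by rw [← hEapp, hy, Equiv.apply_symm_apply]
    have hFd'x : F p n a (c d') x = k' := by rw [← hEapp, h1, Equiv.apply_symm_apply]
    have hFd'y : F p n a (c d') y = k' + 1 := by rw [← hEapp, h2, Equiv.apply_symm_apply]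
    have hs1 := step (c := c d) hdvd ha2 x y (by rw [hFdx, hFdy])
    have hs2 := step (c := c d') hdvd ha2 x y (by rw [hFd'x, hFd'y])
    have hwne : (if x.1.val = n - 1 then a else -a) ≠ 0 := by
      split <;> simpa using hane
    have hdne : ((y.2.val : ZMod p) - (x.2.val : ZMod p)) ≠ 0 := by
      intro h
      rw [h, mul_zero] at hs1
      exact hwne hs1.symm
    have : c d = c d' := by
      have := hs1.trans hs2.symm
      exact mul_right_cancel₀ hdne this
    exact hne (hcinj this)
  · -- distance condition
    intro d i j j' hj1 hj2 hj1' hj2' hjne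
    have hvj : ((j : ℕ) : ZMod n).val = j := ZMod.val_cast_of_lt (by omega)
    have hvj' : ((j' : ℕ) : ZMod n).val = j' := ZMod.val_cast_of_lt (by omega)
    set t := T p n a (c d) ((j : ℕ) : ZMod n) i with htdef
    set t' := T p n a (c d) ((j' : ℕ) : ZMod n) i with ht'def
    simp only [Equiv.symm_symm]
    rw [hEapp, hEapp]
    have hFj : F p n a (c d) (((j:ℕ) : ZMod n), i) = ((j + n * t : ℕ) : ZMod (n*p)) := by
      rw [F]; congr 1; rw [hvj]
    have hFj' : F p n a (c d) (((j':ℕ) : ZMod n), i) = ((j' + n * t' : ℕ) : ZMod (n*p)) := by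
      rw [F]; congr 1; rw [hvj']
    rw [hFj, hFj']
    set A := j + n * t with hAdef
    set B := j' + n * t' with hBdef
    have hAlt : A < n * p := by
      have := nat_lt (p := p) (n := n) (a := a) (c := c d) (((j:ℕ) : ZMod n), i)
      rw [hvj] at this
      exact this
    have hdiffeq : ((B : ℕ) : ZMod (n*p)) - ((A : ℕ) : ZMod (n*p))
        = ((B + (n*p - A) : ℕ) : ZMod (n*p)) := by
      have hnp0 : ((n : ZMod (n*p)) * p) = 0 := by exact_mod_cast ZMod.natCast_self (n*p)
      push_cast [Nat.cast_sub hAlt.le]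
      linear_combination -hnp0
    rw [hdiffeq, ZMod.val_natCast]
    -- key congruence
    have hTj : ((t : ℕ) : ZMod p) = a * ((j:ℕ) : ZMod p) + c d * (i.val : ZMod p) := by
      rw [htdef, T_cast, hvj]
    have hTj' : ((t' : ℕ) : ZMod p) = a * ((j':ℕ) : ZMod p) + c d * (i.val : ZMod p) := by
      rw [ht'def, T_cast, hvj']
    have hKey : (p:ℤ) ∣ ((j':ℤ) - (j:ℤ)) - 2 * ((t':ℤ) - (t:ℤ)) := by
      have hz : (((((j':ℤ) - (j:ℤ)) - 2 * ((t':ℤ) - (t:ℤ))) : ℤ) : ZMod p) = 0 := by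
        push_cast
        rw [hTj, hTj']
        linear_combination (((j:ℕ) : ZMod p) - ((j':ℕ) : ZMod p)) * ha2
      exact (ZMod.intCast_zmod_eq_zero_iff_dvd _ p).mp hz
    exact arith p n (n*p) A B j j' t t' hp2 (Nat.le_of_dvd (by omega) hdvd) rfl rfl rfl
      hj1 hj2 hj1' hj2' hjne (ZMod.val_lt _) (ZMod.val_lt _)
      (Int.natCast_dvd_natCast.mpr hdvd) hKey
end
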